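/- If an element t of type (4,1) begins a segment of a 4-3-6-5 sequence, then the first element of the next segment is at most (t+1)/2. -/

import Mathlib

/-- One transition of Table 1 of the paper, acting on (current element, type). -/
def step465 : ℕ × ℕ × ℕ → ℕ × ℕ × ℕ
  | (t, 4, 3) => (t - 1, 4, 2)
  | (t, 4, 2) => (t - 1, 4, 1)
  | (t, 4, 1) => ((3 * t + 1) / 4, 3, 1)
  | (t, 4, 0) => (3 * t / 4, 3, 0)
  | (t, 3, 1) => if 4 < t then (t, 6, t % 6) else (3, 3, 0)
  | (t, 3, 0) => if 4 < t then (t, 6, t % 6) else (t, 3, 0)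
  | (t, 6, 4) => (t - 1, 6, 3)
  | (t, 6, 3) => (t - 1, 6, 2)
  | (t, 6, 2) => (t - 1, 6, 1)
  | (t, 6, 1) => ((5 * t + 1) / 6, 5, 1)
  | (t, 6, 0) => (5 * t / 6, 5, 0)
  | (t, 5, 1) => ((4 * t + 1) / 5, 4, 1)
  | (t, 5, 0) => (4 * t / 5, 4, 0)
  | p => p

/-- The `i`-th element (0-indexed, paired with its type) of the 4-3-6-5 sequence starting at `k`. -/
def seq465 (k i : ℕ) : ℕ × ℕ × ℕ := step465^[i] (k, 4, k % 4)

/-- An element starts a new segment iff its type is `(4,0)` or `(4,1)`. -/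
def isStart465 (p : ℕ × ℕ × ℕ) : Prop := p.2 = (4, 0) ∨ p.2 = (4, 1)

/-! From `(t,4,1)` the sequence passes to `u = ⌊(3t+1)/4⌋` of type `(3,1)`. If `u ≤ 4`, or if
`u ≡ 5 (mod 6)`, it gets stuck at a fixed point that never starts a segment. Otherwise it counts
`u` down to the nearest `v ≡ 0, 1 (mod 6)` and multiplies by `5/6` and then `4/5`, so the next
segment starts at about `2u/3 ≈ t/2`; the floors are checked case by case on `u mod 6`. -/

/-- `y` is the first point of the orbit `x, f x, f (f x), …` that satisfies `P`. -/
inductive FirstHit {α : Type*} (f : α → α) (P : α → Prop) : α → α → Prop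
  | here {x : α} : P x → FirstHit f P x x
  | next {x y : α} : ¬ P x → FirstHit f P (f x) y → FirstHit f P x y

namespace FirstHit

variable {α : Type*} {f : α → α} {P : α → Prop} {x y : α}

theorem of_iterate {n : ℕ} (hn : P (f^[n] x)) (hlt : ∀ m < n, ¬ P (f^[m] x)) :
    FirstHit f P x (f^[n] x) := by
  induction n generalizing x with
  | zero => exact here hn
  | succ n ih =>
    exact next (hlt 0 n.succ_pos)
      (ih hn fun m hm => hlt (m + 1) (Nat.succ_lt_succ hm))

theorem eq_of_pos (h : FirstHit f P x y) (hx : P x) : y = x := by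
  cases h with
  | here _ => rfl
  | next hnx _ => exact absurd hx hnx

theorem step (h : FirstHit f P x y) (hx : ¬ P x) {x' : α} (hfx : f x = x') :
    FirstHit f P x' y := by
  cases h with
  | here hpx => exact absurd hpx hx
  | next _ h => exact hfx ▸ h

theorem not_of_isFixedPt (h : FirstHit f P x y) (hx : ¬ P x) (hfix : f x = x) : False := by
  induction h with
  | here hpx => exact hx hpx
  | next _ _ ih => exact ih (by rwa [hfix]) (by rw [hfix, hfix])

end FirstHit

theorem seq465_add (k m n : ℕ) : seq465 k (m + n) = step465^[n] (seq465 k m) := by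
  rw [seq465, add_comm, Function.iterate_add_apply, seq465]

theorem seq465_succ (k m : ℕ) : seq465 k (m + 1) = step465 (seq465 k m) :=
  Function.iterate_succ_apply' _ _ _

@[simp]
theorem isStart465_iff (t a r : ℕ) : isStart465 (t, a, r) ↔ a = 4 ∧ (r = 0 ∨ r = 1) := by
  simp only [isStart465, Prod.mk.injEq]
  tauto

local notation "Hit465" => FirstHit step465 isStart465

theorem firstHit465_of_type60 {v : ℕ} {y : ℕ × ℕ × ℕ} (h : Hit465 (v, 6, 0) y) :
    y = (4 * (5 * v / 6) / 5, 4, 0) :=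
  ((h.step (x' := (5 * v / 6, 5, 0)) (by simp) rfl).step
    (x' := (4 * (5 * v / 6) / 5, 4, 0)) (by simp) rfl).eq_of_pos (by simp)

theorem firstHit465_of_type61 {v : ℕ} {y : ℕ × ℕ × ℕ} (h : Hit465 (v, 6, 1) y) :
    y = ((4 * ((5 * v + 1) / 6) + 1) / 5, 4, 1) :=
  ((h.step (x' := ((5 * v + 1) / 6, 5, 1)) (by simp) rfl).step
    (x' := ((4 * ((5 * v + 1) / 6) + 1) / 5, 4, 1)) (by simp) rfl).eq_of_pos (by simp)

theorem firstHit465_countdown {v r : ℕ} {y : ℕ × ℕ × ℕ} (hr : r ≤ 3)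
    (h : Hit465 (v, 6, r + 1) y) : Hit465 (v - r, 6, 1) y := by
  induction r generalizing v with
  | zero => exact h
  | succ r ih =>
    have hstep : step465 (v, 6, r + 2) = (v - 1, 6, r + 1) := by
      have : r ≤ 2 := by omega
      interval_cases r <;> rfl
    rw [show v - (r + 1) = v - 1 - r by omega]
    exact ih (by omega) (h.step (by simp) hstep)

theorem firstHit465_of_type6 {u : ℕ} {y : ℕ × ℕ × ℕ} (h : Hit465 (u, 6, u % 6) y) :
    3 * y.1 ≤ 2 * u + 1 := by
  have hr : u % 6 < 6 := Nat.mod_lt u (by norm_num)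
  interval_cases hu : u % 6
  · rw [firstHit465_of_type60 h]; dsimp only; omega
  · rw [firstHit465_of_type61 h]; dsimp only; omega
  · rw [firstHit465_of_type61 (firstHit465_countdown (r := 1) (by norm_num) h)]; dsimp only; omega
  · rw [firstHit465_of_type61 (firstHit465_countdown (r := 2) (by norm_num) h)]; dsimp only; omega
  · rw [firstHit465_of_type61 (firstHit465_countdown (r := 3) (by norm_num) h)]; dsimp only; omega
  · exact (h.not_of_isFixedPt (by simp) rfl).elim

theorem firstHit465_next_of_type41 {t : ℕ} {y : ℕ × ℕ × ℕ}
    (h : Hit465 (step465 (t, 4, 1)) y) : y.1 ≤ (t + 1) / 2 := by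
  set u := (3 * t + 1) / 4 with hu
  change Hit465 (u, 3, 1) y at h
  by_cases hu4 : 4 < u
  · have := firstHit465_of_type6 (u := u) (h.step (by simp) (by simp [step465, hu4]))
    omega
  · have h3 : Hit465 (3, 3, 0) y := h.step (by simp) (by simp [step465, hu4])
    exact (h3.not_of_isFixedPt (by simp) rfl).elim

theorem seq465_segment41_next_general (k : ℕ) (i t j : ℕ)
    (hstart : seq465 k i = (t, 4, 1))
    (hij : i < j) (hj : isStart465 (seq465 k j))
    (hfirst : ∀ m, i < m → m < j → ¬ isStart465 (seq465 k m)) :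
    (seq465 k j).1 ≤ (t + 1) / 2 := by
  obtain ⟨n, rfl⟩ : ∃ n, j = i + 1 + n := ⟨j - i - 1, by omega⟩
  have hhit : Hit465 (seq465 k (i + 1)) (seq465 k (i + 1 + n)) := by
    rw [seq465_add k (i + 1) n] at hj ⊢
    refine FirstHit.of_iterate hj fun m hm => ?_
    rw [← seq465_add]
    exact hfirst _ (by omega) (by omega)
  rw [seq465_succ, hstart] at hhit
  exact firstHit465_next_of_type41 hhit

/-- If an element `t` of type `(4,1)` begins a segment of a 4-3-6-5 sequence, then the first
element of the next segment is at most `(t+1)/2`. -/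
theorem seq465_segment41_next (k : ℕ) (hk : 4 ≤ k) (i t j : ℕ)
    (hstart : seq465 k i = (t, 4, 1))
    (hij : i < j) (hj : isStart465 (seq465 k j))
    (hfirst : ∀ m, i < m → m < j → ¬ isStart465 (seq465 k m)) :
    (seq465 k j).1 ≤ (t + 1) / 2 :=
  seq465_segment41_next_general k i t j hstart hij hj hfirst
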